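/- arXiv:2209.12864 — 4 statements merged into one kernel-verified Lean document; each statement's English description precedes it below -/
import Mathlib

section
/- For a squarefree integer d, if the equation d·y² = (x²-x-3)(x²+2x-12) has a solution with x, y ∈ ℚ_p for a prime p dividing d with p ≠ 13, then 13 is a quadratic residue modulo p. -/
/-!
Since `p ∥ d`, a nonzero `d * w ^ 2` has odd `p`-adic valuation, so it is never a unit and is
integral only if it lies in `p ℤ_p`. Were `‖x‖ > 1`, the right-hand side would have norm `‖x‖ ^ 4`
and `w = y / x ^ 2` would make `d * w ^ 2` a unit. Hence `x ∈ ℤ_p`, the right-hand side vanishes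
mod `p`, and one of the two quadratic factors, of discriminants `13` and `4 * 13`, has a root
mod `p`.
-/

namespace Padic

variable {p : ℕ} [Fact p.Prime]

theorem norm_intCast_eq_inv_of_squarefree {d : ℤ} (hd : Squarefree d) (hpd : (p : ℤ) ∣ d) :
    ‖(d : ℚ_[p])‖ = (p : ℝ)⁻¹ := by
  obtain ⟨c, rfl⟩ := hpd
  have hp : Prime (p : ℤ) := Nat.prime_iff_prime_int.mp Fact.out
  have hc : IsCoprime c p := by
    refine (hp.irreducible.coprime_iff_not_dvd.mpr fun hpc => ?_).symm
    exact hp.not_isUnit (hd p (mul_dvd_mul_left _ hpc))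
  push_cast
  rw [norm_mul, norm_p, norm_intCast_eq_one_iff.mpr hc, mul_one]

theorem norm_le_one_of_norm_sq_le {w : ℚ_[p]} (h : ‖w‖ ^ 2 ≤ p) : ‖w‖ ≤ 1 := by
  have hp : (1 : ℝ) < p := mod_cast (Fact.out : p.Prime).one_lt
  simpa using (norm_le_pow_iff_norm_lt_pow_add_one w 0).mpr (by
    by_contra! hw
    rw [zero_add, zpow_one] at hw
    nlinarith)

theorem norm_mul_sq_lt_one {d w : ℚ_[p]} (hd : ‖d‖ = (p : ℝ)⁻¹) (h : ‖d * w ^ 2‖ ≤ 1) :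
    ‖d * w ^ 2‖ < 1 := by
  have hp : (1 : ℝ) < p := mod_cast (Fact.out : p.Prime).one_lt
  rw [norm_mul, norm_pow, hd] at h ⊢
  have hw : ‖w‖ ≤ 1 := norm_le_one_of_norm_sq_le (by
    rwa [inv_mul_le_iff₀ (by positivity), mul_one] at h)
  calc (p : ℝ)⁻¹ * ‖w‖ ^ 2 ≤ (p : ℝ)⁻¹ * 1 := by gcongr; exact pow_le_one₀ (norm_nonneg w) hw
    _ < 1 := by rw [mul_one]; exact inv_lt_one_of_one_lt₀ hp

theorem norm_sq_add_mul_add_of_one_lt_norm {x : ℚ_[p]} (hx : 1 < ‖x‖) (b c : ℤ) :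
    ‖x ^ 2 + b * x + c‖ = ‖x‖ ^ 2 := by
  have hlin : ‖(b : ℚ_[p]) * x + c‖ < ‖x ^ 2‖ :=
    calc ‖(b : ℚ_[p]) * x + c‖ ≤ max ‖(b : ℚ_[p]) * x‖ ‖(c : ℚ_[p])‖ := nonarchimedean _ _
      _ ≤ ‖x‖ := by
        refine max_le ?_ ((norm_int_le_one c).trans hx.le)
        rw [norm_mul]
        exact mul_le_of_le_one_left (norm_nonneg x) (norm_int_le_one b)
      _ < ‖x ^ 2‖ := by rw [norm_pow]; nlinarith
  rw [add_assoc, add_eq_max_of_ne hlin.ne', max_eq_left hlin.le, norm_pow]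

end Padic

theorem PadicInt.toZMod_eq_zero_of_norm_lt_one {p : ℕ} [Fact p.Prime] {z : ℤ_[p]} (hz : ‖z‖ < 1) :
    PadicInt.toZMod z = 0 := by
  rwa [← RingHom.mem_ker, PadicInt.ker_toZMod, IsLocalRing.mem_maximalIdeal, PadicInt.mem_nonunits]

theorem isSquare_thirteen_of_mul_eq_zero {R : Type*} [CommRing R] [NoZeroDivisors R] {a : R}
    (h : (a ^ 2 - a - 3) * (a ^ 2 + 2 * a - 12) = 0) : IsSquare (13 : R) := by
  rcases mul_eq_zero.mp h with h | h
  · exact ⟨2 * a - 1, by linear_combination (-4 : R) * h⟩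
  · exact ⟨a + 1, by linear_combination (-1 : R) * h⟩

theorem stmt6_general (d : ℤ) (hd : Squarefree d) (p : ℕ) [Fact p.Prime]
    (hpd : (p : ℤ) ∣ d)
    (h : ∃ x y : ℚ_[p], (d : ℚ_[p]) * y ^ 2 = (x ^ 2 - x - 3) * (x ^ 2 + 2 * x - 12)) :
    IsSquare (13 : ZMod p) := by
  obtain ⟨x, y, hxy⟩ := h
  have hdp := Padic.norm_intCast_eq_inv_of_squarefree hd hpd
  have hx : ‖x‖ ≤ 1 := by
    by_contra! hx
    have h₁ : ‖x ^ 2 - x - 3‖ = ‖x‖ ^ 2 := by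
      simpa [sub_eq_add_neg] using Padic.norm_sq_add_mul_add_of_one_lt_norm hx (-1) (-3)
    have h₂ : ‖x ^ 2 + 2 * x - 12‖ = ‖x‖ ^ 2 := by
      simpa [sub_eq_add_neg] using Padic.norm_sq_add_mul_add_of_one_lt_norm hx 2 (-12)
    have hone : ‖(d : ℚ_[p]) * (y / x ^ 2) ^ 2‖ = 1 := by
      rw [div_pow, ← mul_div_assoc, hxy, norm_div, norm_mul, h₁, h₂, norm_pow, norm_pow,
        ← pow_mul, ← pow_add, div_self (by positivity)]
    exact (Padic.norm_mul_sq_lt_one hdp hone.le).ne hone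
  obtain ⟨a, rfl⟩ : ∃ a : ℤ_[p], (a : ℚ_[p]) = x := ⟨⟨x, hx⟩, rfl⟩
  have hz : ‖(a ^ 2 - a - 3) * (a ^ 2 + 2 * a - 12)‖ < 1 := by
    have hcoe : (((a ^ 2 - a - 3) * (a ^ 2 + 2 * a - 12) : ℤ_[p]) : ℚ_[p]) = d * y ^ 2 :=
      hxy.symm
    have hint := ((a ^ 2 - a - 3) * (a ^ 2 + 2 * a - 12)).norm_le_one
    rw [← PadicInt.padic_norm_e_of_padicInt, hcoe] at hint ⊢
    exact Padic.norm_mul_sq_lt_one hdp hint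
  refine isSquare_thirteen_of_mul_eq_zero (a := PadicInt.toZMod a) ?_
  simpa [map_ofNat] using PadicInt.toZMod_eq_zero_of_norm_lt_one hz

/-- For a squarefree integer `d`, if `d·y² = (x²-x-3)(x²+2x-12)` has a solution with
`x, y ∈ ℚ_p` for a prime `p ∣ d` with `p ≠ 13`, then `13` is a quadratic residue mod `p`. -/
theorem stmt6 (d : ℤ) (hd : Squarefree d) (p : ℕ) [Fact p.Prime]
    (hpd : (p : ℤ) ∣ d) (hp13 : p ≠ 13)
    (h : ∃ x y : ℚ_[p], (d : ℚ_[p]) * y ^ 2 = (x ^ 2 - x - 3) * (x ^ 2 + 2 * x - 12)) :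
    IsSquare (13 : ZMod p) :=
  stmt6_general d hd p hpd h
end

section
/- The point S₃ = (45/4, -117/8) lies on the elliptic curve E: y² = (x-9)(x-8)(x+18) over ℚ and has infinite order in E(ℚ). -/
/-- The elliptic curve `E : y² = (x-9)(x-8)(x+18)`, i.e. `y² = x³ + x² - 234x + 1296`. -/
def E8 : WeierstrassCurve.Affine ℚ :=
  { a₁ := 0, a₂ := 1, a₃ := 0, a₄ := -234, a₆ := 1296 }

/-!
The point has non-integral `x`-coordinate at `2`, so it lies in the first level of the `2`-adic
filtration of `E(ℚ₂)`. On a curve `y² = x³ + a₂x² + a₄x + a₆` with `2`-integral coefficients,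
doubling a point with `|x|₂ > 1` multiplies `|x|₂` by `4`, and adding a point with larger `|x|₂`
does not change it. Hence `|x(nS₃)|₂ = 4 ^ v₂(n) · |x(S₃)|₂`: `nS₃` is an affine point, never `O`.
-/

open WeierstrassCurve WeierstrassCurve.Affine

namespace padicNorm

variable {p : ℕ} [Fact p.Prime]

protected lemma pow (q : ℚ) (n : ℕ) : padicNorm p (q ^ n) = padicNorm p q ^ n :=
  IsAbsoluteValue.abv_pow (padicNorm p) q n

lemma add_eq_left_of_lt {q r : ℚ} (h : padicNorm p r < padicNorm p q) :
    padicNorm p (q + r) = padicNorm p q := by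
  rw [add_eq_max_of_ne h.ne', max_eq_left h.le]

lemma add_lt_of_lt {q r t : ℚ} (hq : padicNorm p q < t) (hr : padicNorm p r < t) :
    padicNorm p (q + r) < t :=
  padicNorm.nonarchimedean.trans_lt (max_lt hq hr)

end padicNorm

lemma padicNorm_two_two : padicNorm 2 2 = 1 / 2 := by
  simpa using padicNorm.padicNorm_p_of_prime (p := 2)

namespace WeierstrassCurve.Affine

variable {W : Affine ℚ}

def Point.HasPadicNormX (p : ℕ) (P : W.Point) (r : ℚ) : Prop :=
  ∃ (x y : ℚ) (h : W.Nonsingular x y), P = .some x y h ∧ padicNorm p x = r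

lemma Point.HasPadicNormX.ne_zero {p : ℕ} {P : W.Point} {r : ℚ} (hP : P.HasPadicNormX p r) :
    P ≠ 0 := by
  obtain ⟨x, y, h, rfl, -⟩ := hP
  exact Point.some_ne_zero h

variable [W.IsCharNeTwoNF]

lemma Y_sq_of_equation {x y : ℚ} (h : W.Equation x y) :
    y ^ 2 = x ^ 3 + W.a₂ * x ^ 2 + W.a₄ * x + W.a₆ := by
  simpa using (W.equation_iff x y).mp h

variable {p : ℕ} [Fact p.Prime]

lemma padicNorm_Y_sq (ha₂ : padicNorm p W.a₂ ≤ 1) (ha₄ : padicNorm p W.a₄ ≤ 1)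
    (ha₆ : padicNorm p W.a₆ ≤ 1) {x y : ℚ} (h : W.Equation x y) (hx : 1 < padicNorm p x) :
    padicNorm p y ^ 2 = padicNorm p x ^ 3 := by
  have hx1 : padicNorm p x < padicNorm p x ^ 2 := lt_self_pow₀ hx (by norm_num)
  have hx2 : padicNorm p x ^ 2 < padicNorm p x ^ 3 := pow_lt_pow_right₀ hx (by norm_num)
  have hlow : padicNorm p (W.a₂ * x ^ 2 + W.a₄ * x + W.a₆) < padicNorm p (x ^ 3) := by
    refine padicNorm.add_lt_of_lt (padicNorm.add_lt_of_lt ?_ ?_) ?_ <;>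
      simp only [padicNorm.mul, padicNorm.pow] <;>
      nlinarith [padicNorm.nonneg (p := p) x, padicNorm.nonneg (p := p) W.a₂,
        padicNorm.nonneg (p := p) W.a₄]
  rw [← padicNorm.pow, Y_sq_of_equation h, add_assoc, add_assoc, ← add_assoc (_ * _),
    padicNorm.add_eq_left_of_lt hlow, padicNorm.pow]

lemma Y_ne_negY_of_one_lt_padicNorm (ha₂ : padicNorm p W.a₂ ≤ 1) (ha₄ : padicNorm p W.a₄ ≤ 1)
    (ha₆ : padicNorm p W.a₆ ≤ 1) {x y : ℚ} (h : W.Equation x y) (hx : 1 < padicNorm p x) :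
    y ≠ W.negY x y := by
  have hy : y ≠ 0 := by
    rintro rfl
    have hx3 : 0 < padicNorm p x ^ 3 := pow_pos (one_pos.trans hx) 3
    rw [← padicNorm_Y_sq ha₂ ha₄ ha₆ h hx, padicNorm.zero] at hx3
    norm_num at hx3
  simpa [eq_neg_iff_add_eq_zero, ← two_mul] using hy

lemma padicNorm_addX_self (ha₂ : padicNorm 2 W.a₂ ≤ 1) (ha₄ : padicNorm 2 W.a₄ ≤ 1)
    (ha₆ : padicNorm 2 W.a₆ ≤ 1) {x y : ℚ} (h : W.Equation x y) (hx : 1 < padicNorm 2 x) :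
    padicNorm 2 (W.addX x x (W.slope x x y y)) = 4 * padicNorm 2 x := by
  have hy := padicNorm_Y_sq ha₂ ha₄ ha₆ h hx
  have hslope : W.slope x x y y = (3 * x ^ 2 + (2 * W.a₂ * x + W.a₄)) / (2 * y) := by
    rw [slope_of_Y_ne rfl (Y_ne_negY_of_one_lt_padicNorm ha₂ ha₄ ha₆ h hx)]
    simp only [negY, a₁_of_isCharNeTwoNF, a₃_of_isCharNeTwoNF]
    ring
  have h3 : padicNorm 2 3 = 1 := by
    simpa using (padicNorm.nat_eq_one_iff (p := 2) 3).mpr (by decide)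
  have hx2 : padicNorm 2 (3 * x ^ 2) = padicNorm 2 x ^ 2 := by
    rw [padicNorm.mul, padicNorm.pow, h3, one_mul]
  have hnum : padicNorm 2 (3 * x ^ 2 + (2 * W.a₂ * x + W.a₄)) = padicNorm 2 x ^ 2 := by
    have hlow : padicNorm 2 (2 * W.a₂ * x + W.a₄) < padicNorm 2 (3 * x ^ 2) := by
      rw [hx2]
      refine padicNorm.add_lt_of_lt ?_ (by nlinarith)
      simp only [padicNorm.mul, padicNorm_two_two]
      nlinarith [padicNorm.nonneg (p := 2) x, padicNorm.nonneg (p := 2) W.a₂]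
    rw [padicNorm.add_eq_left_of_lt hlow, hx2]
  have hℓ : padicNorm 2 (W.slope x x y y) ^ 2 = 4 * padicNorm 2 x := by
    have hx0 : padicNorm 2 x ≠ 0 := by positivity
    rw [hslope, padicNorm.div, padicNorm.mul, hnum, padicNorm_two_two, div_pow, mul_pow, hy]
    field_simp
    ring
  have haddX : W.addX x x (W.slope x x y y) = W.slope x x y y ^ 2 + -(W.a₂ + 2 * x) := by
    simp only [addX, a₁_of_isCharNeTwoNF]
    ring
  have hlow : padicNorm 2 (-(W.a₂ + 2 * x)) < padicNorm 2 (W.slope x x y y ^ 2) := by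
    rw [padicNorm.pow, hℓ, padicNorm.neg]
    refine padicNorm.add_lt_of_lt (by linarith) ?_
    simp only [padicNorm.mul, padicNorm_two_two]
    linarith
  rw [haddX, padicNorm.add_eq_left_of_lt hlow, padicNorm.pow, hℓ]

lemma padicNorm_addX_of_lt (ha₂ : padicNorm p W.a₂ ≤ 1) (ha₄ : padicNorm p W.a₄ ≤ 1)
    (ha₆ : padicNorm p W.a₆ ≤ 1) {x₁ y₁ x₂ y₂ : ℚ} (h₁ : W.Equation x₁ y₁)
    (h₂ : W.Equation x₂ y₂) (hx₂ : 1 < padicNorm p x₂) (hx : padicNorm p x₂ < padicNorm p x₁) :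
    padicNorm p (W.addX x₁ x₂ (W.slope x₁ x₂ y₁ y₂)) = padicNorm p x₂ := by
  have hne : x₁ ≠ x₂ := ne_of_apply_ne (padicNorm p) hx.ne'
  have hsub : padicNorm p (x₁ - x₂) = padicNorm p x₁ := by
    rw [sub_eq_add_neg, padicNorm.add_eq_left_of_lt (by rwa [padicNorm.neg])]
  -- substitute both curve equations into `(y₁ - y₂)² - (a₂ + x₁ + x₂)(x₁ - x₂)²`
  have haddX : W.addX x₁ x₂ (W.slope x₁ x₂ y₁ y₂) = (x₁ ^ 2 * x₂ + (x₁ * x₂ ^ 2 +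
      2 * W.a₂ * x₁ * x₂ + W.a₄ * (x₁ + x₂) + 2 * W.a₆ + -(2 * (y₁ * y₂)))) / (x₁ - x₂) ^ 2 := by
    rw [slope_of_X_ne hne]
    simp only [addX, a₁_of_isCharNeTwoNF]
    field_simp [sub_ne_zero.mpr hne]
    linear_combination Y_sq_of_equation h₁ + Y_sq_of_equation h₂
  have h2 : padicNorm p 2 ≤ 1 := by simpa using padicNorm.of_nat (p := p) 2
  have hy₁ := padicNorm_Y_sq ha₂ ha₄ ha₆ h₁ (hx₂.trans hx)
  have hy₂ := padicNorm_Y_sq ha₂ ha₄ ha₆ h₂ hx₂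
  have hn₂ : 0 < padicNorm p x₂ := one_pos.trans hx₂
  have hn₁ : 0 < padicNorm p x₁ := hn₂.trans hx
  have hlead : padicNorm p (x₁ ^ 2 * x₂) = padicNorm p x₁ ^ 2 * padicNorm p x₂ := by
    rw [padicNorm.mul, padicNorm.pow]
  have hy : padicNorm p (-(2 * (y₁ * y₂))) < padicNorm p (x₁ ^ 2 * x₂) := by
    rw [padicNorm.neg, padicNorm.mul, padicNorm.mul, hlead]
    refine lt_of_le_of_lt (mul_le_of_le_one_left
      (mul_nonneg (padicNorm.nonneg _) (padicNorm.nonneg _)) h2) ?_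
    refine lt_of_pow_lt_pow_left₀ 2 (by positivity) ?_
    rw [mul_pow, hy₁, hy₂]
    have : 0 < padicNorm p x₁ ^ 3 * padicNorm p x₂ ^ 2 := by positivity
    nlinarith [mul_pos this (sub_pos.2 hx)]
  have hrest : padicNorm p (x₁ * x₂ ^ 2 + 2 * W.a₂ * x₁ * x₂ + W.a₄ * (x₁ + x₂) + 2 * W.a₆ +
      -(2 * (y₁ * y₂))) < padicNorm p (x₁ ^ 2 * x₂) := by
    refine padicNorm.add_lt_of_lt (padicNorm.add_lt_of_lt (padicNorm.add_lt_of_lt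
      (padicNorm.add_lt_of_lt ?_ ?_) ?_) ?_) hy <;> rw [hlead]
    · rw [padicNorm.mul, padicNorm.pow]
      nlinarith [mul_pos hn₁ hn₂]
    · simp only [padicNorm.mul]
      have : padicNorm p 2 * padicNorm p W.a₂ ≤ 1 :=
        mul_le_one₀ h2 (padicNorm.nonneg _) ha₂
      nlinarith [mul_pos hn₁ hn₂]
    · rw [padicNorm.mul, padicNorm.add_eq_left_of_lt hx]
      nlinarith [mul_pos hn₁ hn₂]
    · rw [padicNorm.mul]
      nlinarith [mul_pos hn₁ hn₂, padicNorm.nonneg (p := p) W.a₆]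
  rw [haddX, padicNorm.div, padicNorm.add_eq_left_of_lt hrest, hlead, padicNorm.pow, hsub]
  field_simp

namespace Point.HasPadicNormX

variable {P Q : W.Point} {r s : ℚ}

lemma add_self (ha₂ : padicNorm 2 W.a₂ ≤ 1) (ha₄ : padicNorm 2 W.a₄ ≤ 1)
    (ha₆ : padicNorm 2 W.a₆ ≤ 1) (hP : P.HasPadicNormX 2 r) (hr : 1 < r) :
    (P + P).HasPadicNormX 2 (4 * r) := by
  obtain ⟨x, y, h, rfl, rfl⟩ := hP
  rw [Point.add_self_of_Y_ne (Y_ne_negY_of_one_lt_padicNorm ha₂ ha₄ ha₆ h.1 hr)]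
  exact ⟨_, _, _, rfl, padicNorm_addX_self ha₂ ha₄ ha₆ h.1 hr⟩

lemma add_of_lt (ha₂ : padicNorm p W.a₂ ≤ 1) (ha₄ : padicNorm p W.a₄ ≤ 1)
    (ha₆ : padicNorm p W.a₆ ≤ 1) (hP : P.HasPadicNormX p r) (hQ : Q.HasPadicNormX p s)
    (hs : 1 < s) (hsr : s < r) : (P + Q).HasPadicNormX p s := by
  obtain ⟨x₁, y₁, h₁, rfl, rfl⟩ := hP
  obtain ⟨x₂, y₂, h₂, rfl, rfl⟩ := hQ
  rw [Point.add_of_X_ne (ne_of_apply_ne (padicNorm p) hsr.ne')]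
  exact ⟨_, _, _, rfl, padicNorm_addX_of_lt ha₂ ha₄ ha₆ h₁.1 h₂.1 hs hsr⟩

lemma nsmul (ha₂ : padicNorm 2 W.a₂ ≤ 1) (ha₄ : padicNorm 2 W.a₄ ≤ 1)
    (ha₆ : padicNorm 2 W.a₆ ≤ 1) (hP : P.HasPadicNormX 2 r) (hr : 1 < r) {n : ℕ} (hn : n ≠ 0) :
    (n • P).HasPadicNormX 2 (4 ^ padicValNat 2 n * r) := by
  induction n using Nat.strong_induction_on with
  | _ n ih =>
  obtain ⟨k, rfl | rfl⟩ := Nat.even_or_odd' n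
  · have hk : k ≠ 0 := by omega
    have hkP := ih k (by omega) hk
    rw [mul_nsmul', two_nsmul, padicValNat.mul two_ne_zero hk, padicValNat_self, pow_add,
      pow_one, mul_assoc]
    exact hkP.add_self ha₂ ha₄ ha₆
      (hr.trans_le (le_mul_of_one_le_left (one_pos.trans hr).le (one_le_pow₀ (by norm_num))))
  · rw [padicValNat.eq_zero_of_not_dvd (by omega), pow_zero, one_mul]
    rcases Nat.eq_zero_or_pos k with rfl | hk
    · simpa using hP
    have h2kP := ih (2 * k) (by omega) (by omega)
    rw [padicValNat.mul two_ne_zero hk.ne', padicValNat_self] at h2kP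
    rw [succ_nsmul]
    refine h2kP.add_of_lt ha₂ ha₄ ha₆ hP hr ?_
    exact lt_mul_left (one_pos.trans hr) (one_lt_pow₀ (by norm_num) (by omega))

end Point.HasPadicNormX

end WeierstrassCurve.Affine

/-- The point `S₃ = (45/4, -117/8)` lies on `E : y² = (x-9)(x-8)(x+18)` and has infinite
order in `E(ℚ)`. -/
theorem stmt8 :
    E8.Equation (45 / 4) (-117 / 8) ∧
    ∃ h : E8.Nonsingular (45 / 4) (-117 / 8),
      ∀ n : ℕ, n ≠ 0 → n • (WeierstrassCurve.Affine.Point.some _ _ h) ≠ (0 : E8.Point) := by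
  have : E8.IsCharNeTwoNF := ⟨rfl, rfl⟩
  have heq : E8.Equation (45 / 4) (-117 / 8) := by
    rw [equation_iff]
    norm_num [E8]
  have hns : E8.Nonsingular (45 / 4) (-117 / 8) := by
    rw [nonsingular_iff]
    exact ⟨heq, Or.inr (by norm_num [E8])⟩
  have ha₂ : padicNorm 2 E8.a₂ ≤ 1 := by simp [E8]
  have ha₄ : padicNorm 2 E8.a₄ ≤ 1 := by simpa [E8] using padicNorm.of_int (p := 2) (-234)
  have ha₆ : padicNorm 2 E8.a₆ ≤ 1 := by simpa [E8] using padicNorm.of_int (p := 2) 1296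
  have hS : (Point.some _ _ hns).HasPadicNormX 2 4 := by
    refine ⟨_, _, hns, rfl, ?_⟩
    have h45 : padicNorm 2 45 = 1 := by
      simpa using (padicNorm.nat_eq_one_iff (p := 2) 45).mpr (by decide)
    rw [padicNorm.div, h45, show (4 : ℚ) = 2 ^ 2 by norm_num, padicNorm.pow, padicNorm_two_two]
    norm_num
  exact ⟨heq, hns, fun n hn => (hS.nsmul ha₂ ha₄ ha₆ (by norm_num) hn).ne_zero⟩
end

section
/- Let d be a nonzero integer and let E^d: y² = (x-8d)(x-9d)(x+18d). If R = ((r²-9d)/2, (r³-25d·r)/2) where r satisfies r⁴ - 50d·r² + 729d² = 0, then 2R = (8d, 0) on E^d. -/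
/-!
The tangent to `E^d` at `R` has slope `r`, as the quartic for `r` shows. Since `E^d` has
`a₁ = a₃ = 0`, the tangent meets the curve again at `x = r² - d - 2·x(R) = 8d`, where the
cubic vanishes; so the third intersection point is the 2-torsion point `(8d, 0)`, which is
its own negative. Nonsingularity of both points is automatic, the discriminant
`16·702²·d⁶` being nonzero.
-/

/-- The quadratic twist `E^d : y² = (x-8d)(x-9d)(x+18d)`, i.e.
`y² = x³ + d·x² - 234d²·x + 1296d³`, base-changed to a field `F`. -/
def Etw (F : Type*) [Field F] (d : F) : WeierstrassCurve.Affine F :=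
  { a₁ := 0, a₂ := d, a₃ := 0, a₄ := -234 * d ^ 2, a₆ := 1296 * d ^ 3 }

open WeierstrassCurve.Affine

section Twist

variable {F : Type*} [Field F]

lemma Etw_Δ (d : F) : (Etw F d).Δ = 16 * 702 ^ 2 * d ^ 6 := by
  simp only [Etw, WeierstrassCurve.Δ, WeierstrassCurve.b₂, WeierstrassCurve.b₄,
    WeierstrassCurve.b₆, WeierstrassCurve.b₈]
  ring

lemma Etw_Δ_ne_zero [CharZero F] {d : F} (hd : d ≠ 0) : (Etw F d).Δ ≠ 0 := by
  rw [Etw_Δ]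
  exact mul_ne_zero (by norm_num) (pow_ne_zero 6 hd)

lemma Etw_negY (d x y : F) : (Etw F d).negY x y = -y := by
  simp only [Etw, negY, zero_mul, sub_zero]

lemma Etw_nonsingular_iff [CharZero F] {d : F} (hd : d ≠ 0) {x y : F} :
    (Etw F d).Nonsingular x y ↔ y ^ 2 = x ^ 3 + d * x ^ 2 - 234 * d ^ 2 * x + 1296 * d ^ 3 := by
  rw [← equation_iff_nonsingular_of_Δ_ne_zero (Etw_Δ_ne_zero hd), equation_iff]
  simp only [Etw]
  constructor <;> intro h <;> linear_combination h

end Twist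

section HalfOfTwoTorsion

variable {F : Type*} [Field F] [CharZero F] {d r : F}

lemma ne_zero_of_quartic (hd : d ≠ 0) (hr : r ^ 4 - 50 * d * r ^ 2 + 729 * d ^ 2 = 0) :
    r ≠ 0 := by
  rintro rfl
  exact hd (pow_eq_zero_iff two_ne_zero |>.mp (by linear_combination hr / 729))

lemma sq_sub_ne_zero_of_quartic (hd : d ≠ 0)
    (hr : r ^ 4 - 50 * d * r ^ 2 + 729 * d ^ 2 = 0) : r ^ 2 - 25 * d ≠ 0 := by
  intro h
  -- substituting `r² = 25d` into the quartic leaves `104 d² = 0`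
  exact hd (pow_eq_zero_iff two_ne_zero |>.mp
    (by linear_combination hr / 104 - (r ^ 2 - 25 * d) / 104 * h))

lemma halfPoint_y_ne_zero (hd : d ≠ 0) (hr : r ^ 4 - 50 * d * r ^ 2 + 729 * d ^ 2 = 0) :
    (r ^ 3 - 25 * d * r) / 2 ≠ 0 := by
  have hfactor : r ^ 3 - 25 * d * r = r * (r ^ 2 - 25 * d) := by ring
  rw [hfactor]
  exact div_ne_zero (mul_ne_zero (ne_zero_of_quartic hd hr) (sq_sub_ne_zero_of_quartic hd hr))
    two_ne_zero

lemma halfPoint_nonsingular (hd : d ≠ 0) (hr : r ^ 4 - 50 * d * r ^ 2 + 729 * d ^ 2 = 0) :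
    (Etw F d).Nonsingular ((r ^ 2 - 9 * d) / 2) ((r ^ 3 - 25 * d * r) / 2) := by
  rw [Etw_nonsingular_iff hd]
  linear_combination (r ^ 2 - 25 * d) / 8 * hr

lemma twoTorsion_nonsingular (hd : d ≠ 0) : (Etw F d).Nonsingular (8 * d) 0 := by
  rw [Etw_nonsingular_iff hd]
  ring

lemma halfPoint_y_ne_negY (hd : d ≠ 0) (hr : r ^ 4 - 50 * d * r ^ 2 + 729 * d ^ 2 = 0) :
    (r ^ 3 - 25 * d * r) / 2 ≠
      (Etw F d).negY ((r ^ 2 - 9 * d) / 2) ((r ^ 3 - 25 * d * r) / 2) := by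
  rw [Etw_negY]
  intro h
  exact halfPoint_y_ne_zero hd hr (by linear_combination h / 2)

lemma halfPoint_slope [DecidableEq F] (hd : d ≠ 0)
    (hr : r ^ 4 - 50 * d * r ^ 2 + 729 * d ^ 2 = 0) :
    (Etw F d).slope ((r ^ 2 - 9 * d) / 2) ((r ^ 2 - 9 * d) / 2)
      ((r ^ 3 - 25 * d * r) / 2) ((r ^ 3 - 25 * d * r) / 2) = r := by
  have hne := halfPoint_y_ne_negY hd hr
  rw [slope_of_Y_ne rfl hne, div_eq_iff (sub_ne_zero.mpr hne)]
  simp only [Etw, negY]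
  linear_combination (-1 / 4 : F) * hr

end HalfOfTwoTorsion

open Classical in
/-- If `r` satisfies `r⁴ - 50d·r² + 729d² = 0` (with `d` a nonzero integer) and
`R = ((r²-9d)/2, (r³-25d·r)/2)`, then `2R = (8d, 0)` on `E^d : y² = (x-8d)(x-9d)(x+18d)`. -/
theorem stmt9 (F : Type*) [Field F] [CharZero F] (d : ℤ) (hd : d ≠ 0) (r : F)
    (hr : r ^ 4 - 50 * (d : F) * r ^ 2 + 729 * (d : F) ^ 2 = 0) :
    ∃ (h : (Etw F (d : F)).Nonsingular ((r ^ 2 - 9 * (d : F)) / 2)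
        ((r ^ 3 - 25 * (d : F) * r) / 2))
      (h8 : (Etw F (d : F)).Nonsingular (8 * (d : F)) 0),
      (2 : ℕ) • WeierstrassCurve.Affine.Point.some _ _ h =
        WeierstrassCurve.Affine.Point.some _ _ h8 := by
  have hD : (d : F) ≠ 0 := Int.cast_ne_zero.mpr hd
  refine ⟨halfPoint_nonsingular hD hr, twoTorsion_nonsingular hD, ?_⟩
  rw [two_nsmul, Point.add_self_of_Y_ne (halfPoint_y_ne_negY hD hr), Point.some.injEq,
    addY, negAddY, halfPoint_slope hD hr]
  simp only [Etw, addX, negY]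
  constructor <;> ring
end

section
/- For an elliptic curve Ẽ over ℚ₂ with a₁ = 0, the quotient F(2ℤ₂)/2F(2ℤ₂) of the formal group F of Ẽ is isomorphic to ℤ/2ℤ. -/
instance : Fact (Nat.Prime 2) := ⟨Nat.prime_two⟩

/-!
On `2ℤ₂` write `F(x, y) = x + y + G(x, y)`, where `G` only has terms of total degree `≥ 3`, so
`G(x, y) ≡ 0 mod 8`. Writing a point as `x = 2u`, the map `x ↦ u mod 2` is therefore a
homomorphism onto `ℤ/2ℤ`, and it kills `2F(2ℤ₂)` because `ℤ/2ℤ` has exponent 2. Conversely, if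
`x = 4s`, the equation `F(y, y) = x` becomes, for `y = 2w`, `w + G(2w, 2w)/4 = s`; since
`w ↦ G(2w, 2w)/4` is `1/2`-Lipschitz, Banach's fixed point theorem solves it. So the kernel is
exactly `2F(2ℤ₂)`.
-/

open IsUltrametricDist NNReal

theorem norm_pow_sub_pow_le {R : Type*} [NormedCommRing R] [NormOneClass R] [NormMulClass R]
    [IsUltrametricDist R] {x y : R} {r : ℝ} (hx : ‖x‖ ≤ r) (hy : ‖y‖ ≤ r) (k : ℕ) :
    ‖x ^ k - y ^ k‖ ≤ r ^ (k - 1) * ‖x - y‖ := by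
  have hr : 0 ≤ r := (norm_nonneg x).trans hx
  rw [← geom_sum₂_mul, norm_mul]
  refine mul_le_mul_of_nonneg_right
    (norm_sum_le_of_forall_le_of_nonneg (by positivity) fun i hi => ?_) (norm_nonneg _)
  have hik : i + (k - 1 - i) = k - 1 := by have := Finset.mem_range.mp hi; omega
  calc ‖x ^ i * y ^ (k - 1 - i)‖ = ‖x‖ ^ i * ‖y‖ ^ (k - 1 - i) := by
        rw [norm_mul, norm_pow, norm_pow]
    _ ≤ r ^ i * r ^ (k - 1 - i) := by gcongr
    _ = r ^ (k - 1) := by rw [← pow_add, hik]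

theorem exists_add_eq_of_lipschitzWith {E : Type*} [NormedAddCommGroup E] [CompleteSpace E]
    {K : ℝ≥0} (hK : K < 1) {h : E → E} (hh : LipschitzWith K h) (s : E) :
    ∃ w, w + h w = s := by
  have hT : ContractingWith K fun w => s - h w :=
    ⟨hK, by simpa using (LipschitzWith.const s).sub hh⟩
  exact ⟨_, eq_sub_iff_add_eq.mp hT.fixedPoint_isFixedPt.symm⟩

theorem exists_mul_add_eq_mul {R : Type*} [NormedCommRing R] [NormMulClass R] [CompleteSpace R]
    {c : R} (hc : c ≠ 0) {g : R → R} (hdvd : ∀ w, c ∣ g w) {K : ℝ≥0} (hK : K < 1)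
    (hg : ∀ w w', ‖g w - g w'‖ ≤ ‖c‖ * (K * ‖w - w'‖)) (s : R) :
    ∃ w, c * w + g w = c * s := by
  choose h hh using hdvd
  have hlip : LipschitzWith K h := LipschitzWith.of_dist_le_mul fun w w' => by
    rw [dist_eq_norm, dist_eq_norm]
    refine le_of_mul_le_mul_left ?_ (norm_pos_iff.mpr hc)
    rw [← norm_mul, mul_sub, ← hh, ← hh]
    exact hg w w'
  obtain ⟨w, hw⟩ := exists_add_eq_of_lipschitzWith hK hlip s
  exact ⟨w, by rw [hh w, ← mul_add, hw]⟩

namespace PadicInt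

variable {p : ℕ} [Fact p.Prime]

theorem norm_le_inv_pow_iff_dvd (x : ℤ_[p]) (n : ℕ) :
    ‖x‖ ≤ (p : ℝ)⁻¹ ^ n ↔ (p : ℤ_[p]) ^ n ∣ x := by
  rw [inv_pow, ← zpow_natCast, ← zpow_neg, norm_le_pow_iff_mem_span_pow,
    Ideal.mem_span_singleton]

theorem toZMod_eq_zero_iff_dvd (x : ℤ_[p]) : toZMod x = 0 ↔ (p : ℤ_[p]) ∣ x := by
  rw [← RingHom.mem_ker, ker_toZMod, maximalIdeal_eq_span_p, Ideal.mem_span_singleton]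

theorem norm_two : ‖(2 : ℤ_[2])‖ = 2⁻¹ := by
  simpa using norm_p (p := 2)

theorem norm_two_mul_le (x : ℤ_[2]) : ‖2 * x‖ ≤ 2⁻¹ := by
  rw [norm_mul, norm_two]
  exact mul_le_of_le_one_right (by norm_num) (norm_le_one x)

theorem four_dvd_of_norm_le {x : ℤ_[2]} (hx : ‖x‖ ≤ 4⁻¹) : (4 : ℤ_[2]) ∣ x := by
  have h := (norm_le_inv_pow_iff_dvd x 2).mp (hx.trans (by norm_num))
  norm_num at h
  exact h

end PadicInt

noncomputable def evalSeries₂ {R : Type*} [CommRing R] [TopologicalSpace R]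
    (d : ℕ × ℕ → R) (x y : R) : R :=
  ∑' m : ℕ × ℕ, d m * x ^ m.1 * y ^ m.2

def linearCoeff {R : Type*} [Semiring R] (m : ℕ × ℕ) : R :=
  if m = (1, 0) ∨ m = (0, 1) then 1 else 0

theorem evalSeries₂_linearCoeff {R : Type*} [CommRing R] [TopologicalSpace R] (x y : R) :
    evalSeries₂ linearCoeff x y = x + y := by
  rw [evalSeries₂, tsum_eq_sum (s := {(1, 0), (0, 1)}), Finset.sum_pair (by decide)]
  · simp [linearCoeff]
  · intro m hm
    simp only [Finset.mem_insert, Finset.mem_singleton] at hm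
    simp [linearCoeff, hm]

theorem eq_linearCoeff_of_lt_three {R : Type*} [CommRing R] {c : ℕ × ℕ → R}
    (h00 : c (0, 0) = 0) (h10 : c (1, 0) = 1) (h01 : c (0, 1) = 1) (h11 : c (1, 1) = 0)
    (h20 : c (2, 0) = 0) (h02 : c (0, 2) = 0) {m : ℕ × ℕ} (hm : m.1 + m.2 < 3) :
    c m = linearCoeff m := by
  obtain ⟨i, j⟩ := m
  have hi : i < 3 := by simp only at hm; omega
  have hj : j < 3 := by simp only at hm; omega
  interval_cases i <;> interval_cases j <;> simp_all [linearCoeff]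

section PadicSeries

variable {p : ℕ} [Fact p.Prime] (d : ℕ × ℕ → ℤ_[p]) {x y : ℤ_[p]}

theorem summable_monomials (hx : ‖x‖ < 1) (hy : ‖y‖ < 1) :
    Summable fun m : ℕ × ℕ => d m * x ^ m.1 * y ^ m.2 := by
  refine Summable.of_norm_bounded ((summable_geometric_of_lt_one (norm_nonneg x) hx).mul_of_nonneg
    (summable_geometric_of_lt_one (norm_nonneg y) hy) (fun _ => by positivity)
    fun _ => by positivity) fun m => ?_
  rw [norm_mul, norm_mul, norm_pow, norm_pow]
  exact mul_le_mul_of_nonneg_right (mul_le_of_le_one_left (by positivity) (PadicInt.norm_le_one _))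
    (by positivity)

theorem evalSeries₂_sub (d' : ℕ × ℕ → ℤ_[p]) (hx : ‖x‖ < 1) (hy : ‖y‖ < 1) :
    evalSeries₂ (d - d') x y = evalSeries₂ d x y - evalSeries₂ d' x y := by
  rw [evalSeries₂, evalSeries₂, evalSeries₂,
    ← (summable_monomials d hx hy).tsum_sub (summable_monomials d' hx hy)]
  simp only [Pi.sub_apply, sub_mul]

variable {d} {n : ℕ} (hd : ∀ m : ℕ × ℕ, m.1 + m.2 < n → d m = 0) {r : ℝ}
include hd

theorem norm_evalSeries₂_le (hr : r ≤ 1) (hx : ‖x‖ ≤ r) (hy : ‖y‖ ≤ r) :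
    ‖evalSeries₂ d x y‖ ≤ r ^ n := by
  have hr0 : 0 ≤ r := (norm_nonneg x).trans hx
  refine norm_tsum_le_of_forall_le_of_nonneg (by positivity) fun m => ?_
  by_cases hm : m.1 + m.2 < n
  · simp [hd m hm]; positivity
  calc ‖d m * x ^ m.1 * y ^ m.2‖ ≤ 1 * r ^ m.1 * r ^ m.2 := by
        rw [norm_mul, norm_mul, norm_pow, norm_pow]
        gcongr
        exact PadicInt.norm_le_one _
    _ ≤ r ^ n := by
        rw [one_mul, ← pow_add]
        exact pow_le_pow_of_le_one hr0 hr (not_lt.mp hm)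

theorem norm_evalSeries₂_diag_sub_le (hr : r < 1) (hx : ‖x‖ ≤ r) (hy : ‖y‖ ≤ r) :
    ‖evalSeries₂ d x x - evalSeries₂ d y y‖ ≤ r ^ (n - 1) * ‖x - y‖ := by
  have hr0 : 0 ≤ r := (norm_nonneg x).trans hx
  rw [evalSeries₂, evalSeries₂,
    ← (summable_monomials d (hx.trans_lt hr) (hx.trans_lt hr)).tsum_sub
      (summable_monomials d (hy.trans_lt hr) (hy.trans_lt hr))]
  refine norm_tsum_le_of_forall_le_of_nonneg (by positivity) fun m => ?_
  by_cases hm : m.1 + m.2 < n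
  · simp [hd m hm]; positivity
  rw [mul_assoc, mul_assoc, ← pow_add, ← pow_add, ← mul_sub, norm_mul]
  calc ‖d m‖ * ‖x ^ (m.1 + m.2) - y ^ (m.1 + m.2)‖
      ≤ 1 * (r ^ (m.1 + m.2 - 1) * ‖x - y‖) := by
        gcongr
        · exact PadicInt.norm_le_one _
        · exact norm_pow_sub_pow_le hx hy _
    _ ≤ r ^ (n - 1) * ‖x - y‖ := by
        rw [one_mul]
        exact mul_le_mul_of_nonneg_right
          (pow_le_pow_of_le_one hr0 hr.le (Nat.sub_le_sub_right (not_lt.mp hm) 1)) (norm_nonneg _)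

end PadicSeries

section FormalGroupAtTwo

variable {d : ℕ × ℕ → ℤ_[2]} (hd : ∀ m : ℕ × ℕ, m.1 + m.2 < 3 → d m = 0)
include hd

theorem four_dvd_evalSeries₂ {x y : ℤ_[2]} (hx : ‖x‖ ≤ 2⁻¹) (hy : ‖y‖ ≤ 2⁻¹) :
    (4 : ℤ_[2]) ∣ evalSeries₂ d x y :=
  PadicInt.four_dvd_of_norm_le <| (norm_evalSeries₂_le hd (by norm_num) hx hy).trans (by norm_num)

theorem exists_four_mul_add_evalSeries₂ (s : ℤ_[2]) :
    ∃ w, 4 * w + evalSeries₂ d (2 * w) (2 * w) = 4 * s := by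
  refine exists_mul_add_eq_mul (by norm_num : (4 : ℤ_[2]) ≠ 0)
    (fun w => four_dvd_evalSeries₂ hd (PadicInt.norm_two_mul_le w) (PadicInt.norm_two_mul_le w))
    (K := 2⁻¹) (by norm_num) (fun w w' => ?_) s
  calc ‖evalSeries₂ d (2 * w) (2 * w) - evalSeries₂ d (2 * w') (2 * w')‖
      ≤ 2⁻¹ ^ (3 - 1) * ‖2 * w - 2 * w'‖ :=
        norm_evalSeries₂_diag_sub_le hd (by norm_num) (PadicInt.norm_two_mul_le w)
          (PadicInt.norm_two_mul_le w')
    _ = ‖(2 * 2 : ℤ_[2])‖ * (↑(2⁻¹ : ℝ≥0) * ‖w - w'‖) := by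
        rw [← mul_sub, norm_mul, norm_mul, PadicInt.norm_two]
        push_cast
        ring
    _ = ‖(4 : ℤ_[2])‖ * (↑(2⁻¹ : ℝ≥0) * ‖w - w'‖) := by norm_num

end FormalGroupAtTwo

theorem nonempty_quotient_two_equiv_zmod_two {A : Type*} [AddCommGroup A]
    (e : A ≃ {x : ℤ_[2] // ‖x‖ ≤ 2⁻¹})
    (hadd : ∀ a b, (4 : ℤ_[2]) ∣ e (a + b) - (e a + e b))
    (hhalf : ∀ a, (4 : ℤ_[2]) ∣ e a → ∃ b, b + b = a) :
    Nonempty ((A ⧸ (zsmulAddGroupHom 2 : A →+ A).range) ≃+ ZMod 2) := by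
  have h2dvd (a : A) : (2 : ℤ_[2]) ∣ e a := by
    simpa using (PadicInt.norm_le_inv_pow_iff_dvd (e a : ℤ_[2]) 1).mp (by simpa using (e a).2)
  choose u hu using h2dvd
  let Φ : A →+ ZMod 2 := AddMonoidHom.mk' (fun a => PadicInt.toZMod (u a)) fun a b => by
    obtain ⟨k, hk⟩ := hadd a b
    have huk : u (a + b) = u a + u b + 2 * k :=
      mul_left_cancel₀ two_ne_zero (by linear_combination hk - hu (a + b) + hu a + hu b)
    rw [huk, map_add, map_add, map_mul, map_ofNat, (by decide : (2 : ZMod 2) = 0), zero_mul,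
      add_zero]
  have hsurj : Function.Surjective Φ := by
    intro z
    fin_cases z
    · exact ⟨0, map_zero Φ⟩
    · refine ⟨e.symm ⟨2, PadicInt.norm_two.le⟩, ?_⟩
      have h1 : u (e.symm ⟨2, PadicInt.norm_two.le⟩) = 1 :=
        mul_left_cancel₀ two_ne_zero (by rw [← hu, Equiv.apply_symm_apply, mul_one])
      show PadicInt.toZMod (p := 2) _ = 1
      rw [h1, map_one]
  have hker : (zsmulAddGroupHom 2 : A →+ A).range = Φ.ker := by
    apply le_antisymm
    · rintro _ ⟨b, rfl⟩
      rw [AddMonoidHom.mem_ker, zsmulAddGroupHom_apply, map_zsmul, two_zsmul,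
        CharTwo.add_self_eq_zero]
    · intro a ha
      obtain ⟨k, hk⟩ := (PadicInt.toZMod_eq_zero_iff_dvd (u a)).mp (AddMonoidHom.mem_ker.mp ha)
      obtain ⟨b, hb⟩ := hhalf a ⟨k, by rw [hu, hk]; push_cast; ring⟩
      exact ⟨b, by rw [zsmulAddGroupHom_apply, two_zsmul, hb]⟩
  exact ⟨(QuotientAddGroup.quotientAddEquivOfEq hker).trans
    (QuotientAddGroup.quotientKerEquivOfSurjective Φ hsurj)⟩

/-- The formal group law is `F(x, y) = ∑ c_{ij} x^i y^j`, with `c₁₁ = -a₁`; `e` identifies `A`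
with `F(2ℤ₂)`. -/
theorem stmt16_general (F : ℤ_[2] → ℤ_[2] → ℤ_[2]) (c : ℕ × ℕ → ℤ_[2])
    (hF : ∀ x y : ℤ_[2], F x y = ∑' m : ℕ × ℕ, c m * x ^ m.1 * y ^ m.2)
    (h00 : c (0, 0) = 0) (h10 : c (1, 0) = 1) (h01 : c (0, 1) = 1)
    (h11 : c (1, 1) = 0)
    (hx : ∀ i : ℕ, 2 ≤ i → c (i, 0) = 0) (hy : ∀ j : ℕ, 2 ≤ j → c (0, j) = 0)
    (A : Type*) [AddCommGroup A] (e : A ≃ {x : ℤ_[2] // ‖x‖ ≤ 2⁻¹})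
    (he : ∀ a b : A, (e (a + b) : ℤ_[2]) = F (e a) (e b)) :
    Nonempty ((A ⧸ (zsmulAddGroupHom 2 : A →+ A).range) ≃+ ZMod 2) := by
  have hd (m : ℕ × ℕ) (hm : m.1 + m.2 < 3) : (c - linearCoeff : ℕ × ℕ → ℤ_[2]) m = 0 := by
    rw [Pi.sub_apply, sub_eq_zero]
    exact eq_linearCoeff_of_lt_three h00 h10 h01 h11 (hx 2 le_rfl) (hy 2 le_rfl) hm
  have hFd (x y : ℤ_[2]) (hxr : ‖x‖ ≤ 2⁻¹) (hyr : ‖y‖ ≤ 2⁻¹) :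
      F x y = x + y + evalSeries₂ (c - linearCoeff) x y := by
    rw [evalSeries₂_sub _ _ (hxr.trans_lt (by norm_num)) (hyr.trans_lt (by norm_num)),
      evalSeries₂_linearCoeff, add_sub_cancel, hF, evalSeries₂]
  refine nonempty_quotient_two_equiv_zmod_two e (fun a b => ?_) fun a ⟨s, hs⟩ => ?_
  · rw [he, hFd _ _ (e a).2 (e b).2, add_sub_cancel_left]
    exact four_dvd_evalSeries₂ hd (e a).2 (e b).2
  · obtain ⟨w, hw⟩ := exists_four_mul_add_evalSeries₂ hd s
    have h2w := PadicInt.norm_two_mul_le w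
    refine ⟨e.symm ⟨2 * w, h2w⟩, e.injective (Subtype.ext ?_)⟩
    rw [he, Equiv.apply_symm_apply, hFd _ _ h2w h2w, hs, ← hw]
    ring

/-- For an elliptic curve over `ℚ₂` with `a₁ = 0`, the quotient `F(2ℤ₂)/2F(2ℤ₂)` of the
group of points of its formal group `F` with parameter in `2ℤ₂` is isomorphic to `ℤ/2ℤ`.
Here the formal group law is given by a convergent power series `F(x,y) = ∑ c_{ij} x^i y^j`
with `c₀₀ = 0`, `c₁₀ = c₀₁ = 1`, `c₁₁ = -a₁ = 0`, `c_{i0} = c_{0j} = 0` for `i, j ≥ 2`, and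
`A` is the abelian group of points `F(2ℤ₂)`, i.e. an abelian group whose underlying set is
`{x : ℤ₂ | ‖x‖ ≤ 1/2}` and whose addition is given by `F`. -/
theorem stmt16 (F : ℤ_[2] → ℤ_[2] → ℤ_[2]) (c : ℕ × ℕ → ℤ_[2])
    (hsum : ∀ x y : ℤ_[2], Summable fun m : ℕ × ℕ => c m * x ^ m.1 * y ^ m.2)
    (hF : ∀ x y : ℤ_[2], F x y = ∑' m : ℕ × ℕ, c m * x ^ m.1 * y ^ m.2)
    (h00 : c (0, 0) = 0) (h10 : c (1, 0) = 1) (h01 : c (0, 1) = 1)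
    (h11 : c (1, 1) = 0)
    (hx : ∀ i : ℕ, 2 ≤ i → c (i, 0) = 0) (hy : ∀ j : ℕ, 2 ≤ j → c (0, j) = 0)
    (A : Type*) [AddCommGroup A] (e : A ≃ {x : ℤ_[2] // ‖x‖ ≤ 2⁻¹})
    (he : ∀ a b : A, (e (a + b) : ℤ_[2]) = F (e a) (e b)) :
    Nonempty ((A ⧸ (zsmulAddGroupHom 2 : A →+ A).range) ≃+ ZMod 2) :=
  stmt16_general F c hF h00 h10 h01 h11 hx hy A e he
end
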